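/- arXiv:math/0610559 — 2 statements merged into one kernel-verified Lean document; each statement's English description precedes it below -/
import Mathlib

section
/- If x, y are grid states and r ∈ Rect(x,y) is a rectangle with no point of x in its interior, then M(x) = M(y) + 1 - 2·#(O ∩ r), where #(O ∩ r) is the number of O-markings in the interior of r. -/
/-- `Ipairs A B` counts pairs `(a, b) ∈ A × B` with `a` strictly dominated by `b`
in both coordinates. -/
def Ipairs (A B : Finset (ℚ × ℚ)) : ℕ :=
  ((A ×ˢ B).filter (fun p => p.1.1 < p.2.1 ∧ p.1.2 < p.2.2)).card

/-- `Jpairs A B = (I(A,B) + I(B,A))/2`. -/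
def Jpairs (A B : Finset (ℚ × ℚ)) : ℚ :=
  ((Ipairs A B : ℚ) + (Ipairs B A : ℚ)) / 2

/-- A (combinatorial) rectangle on the `n × n` torus: distinct columns `a, b`
(left/right edges) and distinct rows `c, d` (bottom/top edges), understood cyclically. -/
def GRect (n : ℕ) := {q : (ZMod n × ZMod n) × ZMod n × ZMod n // q.1.1 ≠ q.1.2 ∧ q.2.1 ≠ q.2.2}

namespace GRect
variable {n : ℕ}
def a (r : GRect n) : ZMod n := r.1.1.1
def b (r : GRect n) : ZMod n := r.1.1.2
def c (r : GRect n) : ZMod n := r.1.2.1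
def d (r : GRect n) : ZMod n := r.1.2.2
end GRect

/-- The rectangle `r` connects the grid state `x` to the grid state `y`. -/
def Connects {n : ℕ} (r : GRect n) (x y : Equiv.Perm (ZMod n)) : Prop :=
  x r.a = r.c ∧ x r.b = r.d ∧ y = x * Equiv.swap r.a r.b

/-- The grid point `(i, j)` lies in the interior of the rectangle `r` (cyclically). -/
def InteriorPt {n : ℕ} (r : GRect n) (i j : ZMod n) : Prop :=
  0 < (i - r.a).val ∧ (i - r.a).val < (r.b - r.a).val ∧
  0 < (j - r.c).val ∧ (j - r.c).val < (r.d - r.c).val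

/-- The rectangle `r` is empty: no point of the grid state `x` lies in its interior. -/
def Empt {n : ℕ} (x : Equiv.Perm (ZMod n)) (r : GRect n) : Prop :=
  ∀ i : ZMod n, ¬ InteriorPt r i (x i)

/-- The cell whose lower-left corner is `(i, j)` (equivalently, with center
`(i + ½, j + ½)`) is contained in the rectangle `r`. -/
def CellIn {n : ℕ} (r : GRect n) (i j : ZMod n) : Prop :=
  (i - r.a).val < (r.b - r.a).val ∧ (j - r.c).val < (r.d - r.c).val

instance {n : ℕ} (r : GRect n) (i j : ZMod n) : Decidable (CellIn r i j) :=
  inferInstanceAs (Decidable (_ ∧ _))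

/-- The number of `O`-markings (the `O` in column `i` sits in the cell `(i, τ i)`)
lying in the rectangle `r`. -/
def Ocount {n : ℕ} [NeZero n] (τ : Equiv.Perm (ZMod n)) (r : GRect n) : ℕ :=
  (Finset.univ.filter (fun i : ZMod n => CellIn r i (τ i))).card

/-- The planar realization of a toroidal grid state, via the standard fundamental
domain `[0,n) × [0,n)`. -/
def statePts (n : ℕ) [NeZero n] (x : Equiv.Perm (ZMod n)) : Finset (ℚ × ℚ) :=
  Finset.univ.image (fun i : ZMod n => ((i.val : ℚ), ((x i).val : ℚ)))

/-- The planar realization of the `O`-markings. -/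
def markPts (n : ℕ) [NeZero n] (τ : Equiv.Perm (ZMod n)) : Finset (ℚ × ℚ) :=
  Finset.univ.image (fun i : ZMod n => ((i.val : ℚ) + 1/2, ((τ i).val : ℚ) + 1/2))

/-- The Maslov grading `M(x) = J(x - O, x - O) + 1`. -/
def Maslov (n : ℕ) [NeZero n] (x τ : Equiv.Perm (ZMod n)) : ℚ :=
  Jpairs (statePts n x) (statePts n x) - 2 * Jpairs (statePts n x) (markPts n τ)
    + Jpairs (markPts n τ) (markPts n τ) + 1

-- ==================== auxiliary development ====================
namespace MaslovAux
open Finset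
variable {n : ℕ} [NeZero n]

def chi (p : Prop) [Decidable p] : ℚ := if p then 1 else 0

lemma chi_congr {p q : Prop} [Decidable p] [Decidable q] (h : p ↔ q) : chi p = chi q := by
  unfold chi; split_ifs with h1 h2 <;> tauto

lemma chi_neg {p : Prop} [Decidable p] (h : ¬ p) : chi p = 0 := if_neg h

lemma chi_mul {p q : Prop} [Decidable p] [Decidable q] : chi p * chi q = chi (p ∧ q) := by
  unfold chi; by_cases hp : p <;> by_cases hq : q <;> simp [hp, hq]

lemma sum_chi (P : ZMod n → Prop) [DecidablePred P] :
    ∑ j, chi (P j) = ((univ.filter P).card : ℚ) := by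
  unfold chi; rw [Finset.sum_boole]

lemma sum_split_pair (a b : ZMod n) (hab : a ≠ b) (F : ZMod n → ℚ) :
    ∑ i, F i = (∑ i ∈ univ \ {a, b}, F i) + F a + F b := by
  have h := Finset.sum_sdiff (f := F) (Finset.subset_univ ({a, b} : Finset (ZMod n)))
  rw [← h, Finset.sum_pair hab]; ring

lemma sum_pair_of_support (a b : ZMod n) (hab : a ≠ b) (F : ZMod n → ℚ)
    (h0 : ∀ i, i ≠ a → i ≠ b → F i = 0) : ∑ i, F i = F a + F b := by
  rw [sum_split_pair a b hab F, Finset.sum_eq_zero, zero_add]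
  intro i hi
  rw [Finset.mem_sdiff, Finset.mem_insert, Finset.mem_singleton] at hi
  push_neg at hi
  exact h0 i hi.2.1 hi.2.2

lemma val_sub_if (i a : ZMod n) :
    (i - a).val = if a.val ≤ i.val then i.val - a.val else i.val + n - a.val := by
  split_ifs with h
  · exact ZMod.val_sub h
  · have ha : a ≠ 0 := by
      intro h0; subst h0; simp [ZMod.val_zero] at h
    rw [sub_eq_add_neg, ZMod.val_add, ZMod.neg_val, if_neg ha]
    have hi := ZMod.val_lt i
    have hav := ZMod.val_lt a
    rw [Nat.mod_eq_of_lt (by omega)]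
    omega

lemma chi_pair_le (a b j : ZMod n) (hab : a ≠ b) :
    chi (a.val ≤ j.val) - chi (b.val ≤ j.val)
      = chi ((j - a).val < (b - a).val) - chi (b.val < a.val) := by
  have hab' : a.val ≠ b.val := fun h => hab (ZMod.val_injective n h)
  have h1 := ZMod.val_lt a
  have h2 := ZMod.val_lt b
  have h3 := ZMod.val_lt j
  unfold chi
  rw [val_sub_if j a, val_sub_if b a]
  split_ifs <;> first | omega | norm_num

lemma chi_pair_lt (a b j : ZMod n) (hab : a ≠ b) (hja : j ≠ a) (hjb : j ≠ b) :
    chi (a.val < j.val) - chi (b.val < j.val)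
      = chi (0 < (j - a).val ∧ (j - a).val < (b - a).val) - chi (b.val < a.val) := by
  have hab' : a.val ≠ b.val := fun h => hab (ZMod.val_injective n h)
  have hja' : j.val ≠ a.val := fun h => hja (ZMod.val_injective n h)
  have hjb' : j.val ≠ b.val := fun h => hjb (ZMod.val_injective n h)
  have h1 := ZMod.val_lt a
  have h2 := ZMod.val_lt b
  have h3 := ZMod.val_lt j
  unfold chi
  rw [val_sub_if j a, val_sub_if b a]
  split_ifs <;> first | omega | norm_num

lemma card_val_lt (k : ℕ) (hk : k ≤ n) :
    (univ.filter fun z : ZMod n => z.val < k).card = k := by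
  have h : (univ.filter fun z : ZMod n => z.val < k).card = (Finset.range k).card := by
    apply Finset.card_bij (fun z _ => z.val)
    · intro z hz; simp only [Finset.mem_filter] at hz; simpa using hz.2
    · intro z1 h1 z2 h2 h; exact ZMod.val_injective n h
    · intro m hm
      rw [Finset.mem_range] at hm
      refine ⟨(m : ZMod n), ?_, ?_⟩
      · simp only [Finset.mem_filter, Finset.mem_univ, true_and]
        rw [ZMod.val_cast_of_lt (lt_of_lt_of_le hm hk)]; exact hm
      · rw [ZMod.val_cast_of_lt (lt_of_lt_of_le hm hk)]
  rw [h, Finset.card_range]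

lemma card_shift (a : ZMod n) (P : ZMod n → Prop) [DecidablePred P] :
    (univ.filter fun j => P (j - a)).card = (univ.filter P).card := by
  apply Finset.card_bij (fun j _ => j - a)
  · intro z hz; simp only [Finset.mem_filter] at hz ⊢; exact ⟨Finset.mem_univ _, hz.2⟩
  · intro z1 h1 z2 h2 h; exact sub_left_injective h
  · intro z hz
    refine ⟨z + a, ?_, by simp⟩
    simp only [Finset.mem_filter, Finset.mem_univ, true_and, add_sub_cancel_right]
    simpa using hz

lemma sum_chi_cell (a b : ZMod n) :
    ∑ j : ZMod n, chi ((j - a).val < (b - a).val) = ((b - a).val : ℚ) := by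
  rw [sum_chi, card_shift a (fun z => z.val < (b - a).val),
    card_val_lt _ (le_of_lt (ZMod.val_lt _))]

lemma sum_chi_int (a b : ZMod n) (hab : a ≠ b) :
    ∑ j : ZMod n, chi (0 < (j - a).val ∧ (j - a).val < (b - a).val)
      = ((b - a).val : ℚ) - 1 := by
  have hba : (b - a) ≠ 0 := sub_ne_zero.mpr (Ne.symm hab)
  have hpos : 0 < (b - a).val := ZMod.val_pos.mpr hba
  rw [sum_chi, card_shift a (fun z => 0 < z.val ∧ z.val < (b - a).val)]
  have : (univ.filter fun z : ZMod n => 0 < z.val ∧ z.val < (b - a).val)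
      = (univ.filter fun z : ZMod n => z.val < (b - a).val).erase 0 := by
    ext z
    simp only [Finset.mem_filter, Finset.mem_erase, Finset.mem_univ, true_and]
    constructor
    · rintro ⟨h1, h2⟩; exact ⟨fun h => by simp [h, ZMod.val_zero] at h1, h2⟩
    · rintro ⟨h1, h2⟩
      refine ⟨Nat.pos_of_ne_zero fun h => h1 (ZMod.val_eq_zero z |>.mp h), h2⟩
  rw [this, Finset.card_erase_of_mem, card_val_lt _ (le_of_lt (ZMod.val_lt _))]
  · push_cast [Nat.cast_sub (by omega : 1 ≤ (b - a).val)]; ring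
  · simp only [Finset.mem_filter, Finset.mem_univ, true_and, ZMod.val_zero]
    exact hpos

lemma lt_half_iff (p q : ℕ) : (p : ℚ) < (q : ℚ) + 1/2 ↔ p ≤ q := by
  constructor
  · intro h; by_contra hh; push_neg at hh
    have : (q : ℚ) + 1 ≤ p := by exact_mod_cast hh
    linarith
  · intro h; have : (p : ℚ) ≤ q := by exact_mod_cast h
    linarith

lemma half_lt_iff (p q : ℕ) : (p : ℚ) + 1/2 < (q : ℚ) ↔ p < q := by
  constructor
  · intro h; by_contra hh; push_neg at hh
    have : (q : ℚ) ≤ p := by exact_mod_cast hh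
    linarith
  · intro h; have : (p : ℚ) + 1 ≤ q := by exact_mod_cast h
    linarith

lemma half_lt_half_iff (p q : ℕ) : (p : ℚ) + 1/2 < (q : ℚ) + 1/2 ↔ p < q := by
  constructor
  · intro h; by_contra hh; push_neg at hh
    have : (q : ℚ) ≤ p := by exact_mod_cast hh
    linarith
  · intro h; have : (p : ℚ) + 1 ≤ q := by exact_mod_cast h
    linarith

lemma chi_factor {P Q R S : Prop} [Decidable P] [Decidable Q] [Decidable R] [Decidable S] :
    chi (P ∧ Q) - chi (P ∧ R) + chi (S ∧ R) - chi (S ∧ Q)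
      = (chi P - chi S) * (chi Q - chi R) := by
  by_cases hP : P <;> by_cases hQ : Q <;> by_cases hR : R <;> by_cases hS : S <;>
    simp [chi, hP, hQ, hR, hS]

lemma chi_flip_lt (p q : ℕ) (h : p ≠ q) : chi (p < q) = 1 - chi (q < p) := by
  unfold chi; split_ifs <;> first | omega | norm_num

lemma chi_flip_le (p q : ℕ) : chi (p < q) = 1 - chi (q ≤ p) := by
  unfold chi; split_ifs <;> first | omega | norm_num

lemma eps_id (A B C D : ℕ) (hab : A ≠ B) (hcd : C ≠ D) :
    chi (B < A ∧ D < C) - chi (B < A ∧ C < D) + chi (A < B ∧ C < D) - chi (A < B ∧ D < C)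
      = (1 - 2 * chi (B < A)) * (1 - 2 * chi (D < C)) := by
  unfold chi; split_ifs <;> first | omega | norm_num

lemma Ipairs_eq_sum (f g : ZMod n → ℚ × ℚ) (hf : Function.Injective f)
    (hg : Function.Injective g) :
    ((Ipairs (univ.image f) (univ.image g) : ℕ) : ℚ)
      = ∑ i : ZMod n, ∑ j : ZMod n, chi ((f i).1 < (g j).1 ∧ (f i).2 < (g j).2) := by
  unfold Ipairs chi
  rw [Finset.card_filter, Finset.sum_product,
    Finset.sum_image (fun x _ y _ h => hf h)]
  have h2 : ∀ i : ZMod n, ∑ b ∈ univ.image g,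
      (if (f i).1 < b.1 ∧ (f i).2 < b.2 then (1:ℕ) else 0)
      = ∑ j : ZMod n, if (f i).1 < (g j).1 ∧ (f i).2 < (g j).2 then 1 else 0 :=
    fun i => Finset.sum_image (fun x _ y _ h => hg h)
  rw [Finset.sum_congr rfl (fun i _ => h2 i)]
  push_cast [apply_ite (Nat.cast : ℕ → ℚ)]
  rfl

lemma state_inj (x : Equiv.Perm (ZMod n)) :
    Function.Injective (fun i : ZMod n => ((i.val : ℚ), ((x i).val : ℚ))) := by
  intro i j h
  have := congrArg Prod.fst h
  simp only at this
  exact ZMod.val_injective n (by exact_mod_cast this)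

lemma mark_inj (τ : Equiv.Perm (ZMod n)) :
    Function.Injective (fun i : ZMod n => ((i.val : ℚ) + 1/2, ((τ i).val : ℚ) + 1/2)) := by
  intro i j h
  have := congrArg Prod.fst h
  simp only at this
  have : (i.val : ℚ) = j.val := by linarith [this]
  exact ZMod.val_injective n (by exact_mod_cast this)

/-- Maslov in terms of natural-number indicator double sums. -/
lemma maslov_eq (x τ : Equiv.Perm (ZMod n)) :
    Maslov n x τ
      = (∑ i : ZMod n, ∑ j : ZMod n, chi (i.val < j.val ∧ (x i).val < (x j).val))
        - (∑ i : ZMod n, ∑ j : ZMod n, chi (i.val ≤ j.val ∧ (x i).val ≤ (τ j).val))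
        - (∑ i : ZMod n, ∑ j : ZMod n, chi (j.val < i.val ∧ (τ j).val < (x i).val))
        + (∑ i : ZMod n, ∑ j : ZMod n, chi (i.val < j.val ∧ (τ i).val < (τ j).val))
        + 1 := by
  have hx := state_inj x
  have ht := mark_inj τ
  unfold Maslov Jpairs statePts markPts
  rw [Ipairs_eq_sum _ _ hx hx, Ipairs_eq_sum _ _ hx ht, Ipairs_eq_sum _ _ ht hx,
    Ipairs_eq_sum _ _ ht ht]
  have e1 : ∀ i j : ZMod n,
      chi (((i.val : ℚ)) < (j.val : ℚ) ∧ ((x i).val : ℚ) < ((x j).val : ℚ))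
        = chi (i.val < j.val ∧ (x i).val < (x j).val) :=
    fun i j => chi_congr (by rw [Nat.cast_lt, Nat.cast_lt])
  have e2 : ∀ i j : ZMod n,
      chi (((i.val : ℚ)) < (j.val : ℚ) + 1/2 ∧ ((x i).val : ℚ) < ((τ j).val : ℚ) + 1/2)
        = chi (i.val ≤ j.val ∧ (x i).val ≤ (τ j).val) :=
    fun i j => chi_congr (by rw [lt_half_iff, lt_half_iff])
  have e3 : ∀ i j : ZMod n,
      chi (((i.val : ℚ)) + 1/2 < (j.val : ℚ) ∧ ((τ i).val : ℚ) + 1/2 < ((x j).val : ℚ))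
        = chi (i.val < j.val ∧ (τ i).val < (x j).val) :=
    fun i j => chi_congr (by rw [half_lt_iff, half_lt_iff])
  have e4 : ∀ i j : ZMod n,
      chi (((i.val : ℚ)) + 1/2 < (j.val : ℚ) + 1/2 ∧ ((τ i).val : ℚ) + 1/2 < ((τ j).val : ℚ) + 1/2)
        = chi (i.val < j.val ∧ (τ i).val < (τ j).val) :=
    fun i j => chi_congr (by rw [half_lt_half_iff, half_lt_half_iff])
  simp only [e1, e2, e3, e4]
  rw [show (∑ i : ZMod n, ∑ j : ZMod n, chi (j.val < i.val ∧ (τ j).val < (x i).val))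
      = ∑ j : ZMod n, ∑ i : ZMod n, chi (j.val < i.val ∧ (τ j).val < (x i).val) from
      Finset.sum_comm]
  ring
end MaslovAux
namespace MaslovAux
open Finset
variable {n : ℕ} [NeZero n]

lemma le_pair_prod (a b c d j t : ZMod n) (hab : a ≠ b) (hcd : c ≠ d) :
    (chi (a.val ≤ j.val) - chi (b.val ≤ j.val)) * (chi (c.val ≤ t.val) - chi (d.val ≤ t.val))
      = chi ((j - a).val < (b - a).val ∧ (t - c).val < (d - c).val)
        - chi (b.val < a.val) * chi ((t - c).val < (d - c).val)
        - chi (d.val < c.val) * chi ((j - a).val < (b - a).val)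
        + chi (b.val < a.val) * chi (d.val < c.val) := by
  rw [chi_pair_le a b j hab, chi_pair_le c d t hcd, ← chi_mul]
  ring

lemma lt_pair_prod (a b c d j t : ZMod n) (hab : a ≠ b) (hcd : c ≠ d)
    (hja : j ≠ a) (hjb : j ≠ b) (htc : t ≠ c) (htd : t ≠ d)
    (hemp : ¬ ((0 < (j - a).val ∧ (j - a).val < (b - a).val) ∧
      (0 < (t - c).val ∧ (t - c).val < (d - c).val))) :
    (chi (a.val < j.val) - chi (b.val < j.val)) * (chi (c.val < t.val) - chi (d.val < t.val))
      = - (chi (b.val < a.val) * chi (0 < (t - c).val ∧ (t - c).val < (d - c).val))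
        - chi (d.val < c.val) * chi (0 < (j - a).val ∧ (j - a).val < (b - a).val)
        + chi (b.val < a.val) * chi (d.val < c.val) := by
  rw [chi_pair_lt a b j hab hja hjb, chi_pair_lt c d t hcd htc htd]
  have h0 : chi (0 < (j - a).val ∧ (j - a).val < (b - a).val)
      * chi (0 < (t - c).val ∧ (t - c).val < (d - c).val) = 0 := by
    rw [chi_mul, chi_neg hemp]
  nlinarith [h0]

/-- Common value of the `SO` and `OS` difference sums. -/
lemma sum_cell_expr (a b c d : ZMod n) (τ : Equiv.Perm (ZMod n)) :
    ∑ j : ZMod n, (chi ((j - a).val < (b - a).val ∧ ((τ j) - c).val < (d - c).val)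
        - chi (b.val < a.val) * chi (((τ j) - c).val < (d - c).val)
        - chi (d.val < c.val) * chi ((j - a).val < (b - a).val)
        + chi (b.val < a.val) * chi (d.val < c.val))
      = (∑ j : ZMod n, chi ((j - a).val < (b - a).val ∧ ((τ j) - c).val < (d - c).val))
        - chi (b.val < a.val) * ((d - c).val : ℚ)
        - chi (d.val < c.val) * ((b - a).val : ℚ)
        + chi (b.val < a.val) * chi (d.val < c.val) * n := by
  rw [Finset.sum_add_distrib, Finset.sum_sub_distrib, Finset.sum_sub_distrib,
    ← Finset.mul_sum, ← Finset.mul_sum, Finset.sum_const, Finset.card_univ, ZMod.card,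
    nsmul_eq_mul]
  have hrow : ∑ j : ZMod n, chi (((τ j) - c).val < (d - c).val) = ((d - c).val : ℚ) := by
    rw [← sum_chi_cell c d]
    exact Equiv.sum_comp τ (fun z => chi ((z - c).val < (d - c).val))
  rw [hrow, sum_chi_cell]
  ring

/-- The `SO` difference. -/
lemma SO_diff (a b c d : ZMod n) (x y τ : Equiv.Perm (ZMod n)) (hab : a ≠ b) (hcd : c ≠ d)
    (hxa : x a = c) (hxb : x b = d) (hya : y a = d) (hyb : y b = c)
    (hyo : ∀ i, i ≠ a → i ≠ b → y i = x i) :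
    (∑ i : ZMod n, ∑ j : ZMod n, chi (i.val ≤ j.val ∧ (x i).val ≤ (τ j).val))
      - (∑ i : ZMod n, ∑ j : ZMod n, chi (i.val ≤ j.val ∧ (y i).val ≤ (τ j).val))
      = (∑ j : ZMod n, chi ((j - a).val < (b - a).val ∧ ((τ j) - c).val < (d - c).val))
        - chi (b.val < a.val) * ((d - c).val : ℚ)
        - chi (d.val < c.val) * ((b - a).val : ℚ)
        + chi (b.val < a.val) * chi (d.val < c.val) * n := by
  rw [← Finset.sum_sub_distrib]
  rw [sum_pair_of_support a b hab _ (fun i hia hib => by rw [hyo i hia hib, sub_self])]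
  rw [hxa, hya, hxb, hyb]
  rw [← Finset.sum_sub_distrib, ← Finset.sum_sub_distrib, ← Finset.sum_add_distrib]
  rw [← sum_cell_expr a b c d τ]
  apply Finset.sum_congr rfl
  intro j _
  rw [← le_pair_prod a b c d j (τ j) hab hcd, ← chi_factor]
  ring

/-- The `OS` difference. -/
lemma OS_diff (a b c d : ZMod n) (x y τ : Equiv.Perm (ZMod n)) (hab : a ≠ b) (hcd : c ≠ d)
    (hxa : x a = c) (hxb : x b = d) (hya : y a = d) (hyb : y b = c)
    (hyo : ∀ i, i ≠ a → i ≠ b → y i = x i) :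
    (∑ i : ZMod n, ∑ j : ZMod n, chi (j.val < i.val ∧ (τ j).val < (x i).val))
      - (∑ i : ZMod n, ∑ j : ZMod n, chi (j.val < i.val ∧ (τ j).val < (y i).val))
      = (∑ j : ZMod n, chi ((j - a).val < (b - a).val ∧ ((τ j) - c).val < (d - c).val))
        - chi (b.val < a.val) * ((d - c).val : ℚ)
        - chi (d.val < c.val) * ((b - a).val : ℚ)
        + chi (b.val < a.val) * chi (d.val < c.val) * n := by
  rw [← Finset.sum_sub_distrib]
  rw [sum_pair_of_support a b hab _ (fun i hia hib => by rw [hyo i hia hib, sub_self])]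
  rw [hxa, hya, hxb, hyb]
  rw [← Finset.sum_sub_distrib, ← Finset.sum_sub_distrib, ← Finset.sum_add_distrib]
  rw [← sum_cell_expr a b c d τ]
  apply Finset.sum_congr rfl
  intro j _
  rw [← le_pair_prod a b c d j (τ j) hab hcd]
  have h1 := chi_factor (P := j.val < a.val) (Q := (τ j).val < c.val)
    (R := (τ j).val < d.val) (S := j.val < b.val)
  have h2 := chi_factor (P := a.val ≤ j.val) (Q := c.val ≤ (τ j).val)
    (R := d.val ≤ (τ j).val) (S := b.val ≤ j.val)
  rw [chi_flip_le j.val a.val, chi_flip_le j.val b.val,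
    chi_flip_le (τ j).val c.val, chi_flip_le (τ j).val d.val] at h1
  linear_combination h1
end MaslovAux
namespace MaslovAux
open Finset
variable {n : ℕ} [NeZero n]

lemma two_le (a b : ZMod n) (hab : a ≠ b) : 2 ≤ n := by
  have h1 := ZMod.val_lt a
  have h2 := ZMod.val_lt b
  have h3 : a.val ≠ b.val := fun h => hab (ZMod.val_injective n h)
  omega

/-- The `SS` difference. -/
lemma SS_diff (a b c d : ZMod n) (x y : Equiv.Perm (ZMod n)) (hab : a ≠ b) (hcd : c ≠ d)
    (hxa : x a = c) (hxb : x b = d) (hya : y a = d) (hyb : y b = c)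
    (hyo : ∀ i, i ≠ a → i ≠ b → y i = x i)
    (hemp : ∀ j : ZMod n, ¬ ((0 < (j - a).val ∧ (j - a).val < (b - a).val) ∧
        (0 < ((x j) - c).val ∧ ((x j) - c).val < (d - c).val))) :
    (∑ i : ZMod n, ∑ j : ZMod n, chi (i.val < j.val ∧ (x i).val < (x j).val))
      - (∑ i : ZMod n, ∑ j : ZMod n, chi (i.val < j.val ∧ (y i).val < (y j).val))
      = 2 * (chi (b.val < a.val) * chi (d.val < c.val) * ((n : ℚ) - 2)
          - chi (b.val < a.val) * (((d - c).val : ℚ) - 1)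
          - chi (d.val < c.val) * (((b - a).val : ℚ) - 1))
        + (1 - 2 * chi (b.val < a.val)) * (1 - 2 * chi (d.val < c.val)) := by
  have h2n : 2 ≤ n := two_le a b hab
  have hab' : a.val ≠ b.val := fun h => hab (ZMod.val_injective n h)
  have hcd' : c.val ≠ d.val := fun h => hcd (ZMod.val_injective n h)
  -- row/column sums
  have hcolsum : ∑ i ∈ univ \ {a, b},
      chi (0 < (i - a).val ∧ (i - a).val < (b - a).val) = ((b - a).val : ℚ) - 1 := by
    have hs := sum_split_pair a b hab
      (fun i => chi (0 < (i - a).val ∧ (i - a).val < (b - a).val))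
    rw [sum_chi_int a b hab] at hs
    have h1 : chi (0 < (a - a).val ∧ (a - a).val < (b - a).val) = 0 :=
      chi_neg (by simp [sub_self, ZMod.val_zero])
    have h2 : chi (0 < (b - a).val ∧ (b - a).val < (b - a).val) = 0 :=
      chi_neg (fun h => lt_irrefl _ h.2)
    rw [h1, h2] at hs; linarith
  have hrowsum : ∑ i ∈ univ \ {a, b},
      chi (0 < ((x i) - c).val ∧ ((x i) - c).val < (d - c).val) = ((d - c).val : ℚ) - 1 := by
    have hs := sum_split_pair a b hab
      (fun i => chi (0 < ((x i) - c).val ∧ ((x i) - c).val < (d - c).val))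
    have hfull : ∑ i : ZMod n, chi (0 < ((x i) - c).val ∧ ((x i) - c).val < (d - c).val)
        = ((d - c).val : ℚ) - 1 := by
      rw [← sum_chi_int c d hcd]
      exact Equiv.sum_comp x (fun v => chi (0 < (v - c).val ∧ (v - c).val < (d - c).val))
    rw [hfull] at hs
    simp only [hxa, hxb] at hs
    have h1 : chi (0 < (c - c).val ∧ (c - c).val < (d - c).val) = 0 :=
      chi_neg (by simp [sub_self, ZMod.val_zero])
    have h2 : chi (0 < (d - c).val ∧ (d - c).val < (d - c).val) = 0 :=
      chi_neg (fun h => lt_irrefl _ h.2)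
    rw [h1, h2] at hs; linarith
  have hcard : ((univ \ {a, b} : Finset (ZMod n)).card : ℚ) = (n : ℚ) - 2 := by
    rw [Finset.card_sdiff_of_subset (Finset.subset_univ _), Finset.card_pair hab,
      Finset.card_univ, ZMod.card]
    push_cast [Nat.cast_sub h2n]
    ring
  -- the common "off-corner" value
  have hmid : ∀ i ∈ univ \ ({a, b} : Finset (ZMod n)),
      (chi (a.val < i.val ∧ c.val < (x i).val) - chi (a.val < i.val ∧ d.val < (x i).val))
      + (chi (b.val < i.val ∧ d.val < (x i).val) - chi (b.val < i.val ∧ c.val < (x i).val))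
      = chi (b.val < a.val) * chi (d.val < c.val)
        - chi (b.val < a.val) * chi (0 < ((x i) - c).val ∧ ((x i) - c).val < (d - c).val)
        - chi (d.val < c.val) * chi (0 < (i - a).val ∧ (i - a).val < (b - a).val) := by
    intro i hi
    rw [Finset.mem_sdiff, Finset.mem_insert, Finset.mem_singleton] at hi
    push_neg at hi
    obtain ⟨-, hia, hib⟩ := hi
    have hxic : x i ≠ c := fun h => hia (x.injective (h.trans hxa.symm))
    have hxid : x i ≠ d := fun h => hib (x.injective (h.trans hxb.symm))
    have h1 := chi_factor (P := a.val < i.val) (Q := c.val < (x i).val)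
      (R := d.val < (x i).val) (S := b.val < i.val)
    have h3 := lt_pair_prod a b c d i (x i) hab hcd hia hib hxic hxid (hemp i)
    linear_combination h1 + h3
  have hmidsum : ∑ i ∈ univ \ ({a, b} : Finset (ZMod n)),
      (chi (b.val < a.val) * chi (d.val < c.val)
        - chi (b.val < a.val) * chi (0 < ((x i) - c).val ∧ ((x i) - c).val < (d - c).val)
        - chi (d.val < c.val) * chi (0 < (i - a).val ∧ (i - a).val < (b - a).val))
      = chi (b.val < a.val) * chi (d.val < c.val) * ((n : ℚ) - 2)
        - chi (b.val < a.val) * (((d - c).val : ℚ) - 1)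
        - chi (d.val < c.val) * (((b - a).val : ℚ) - 1) := by
    simp only [Finset.sum_sub_distrib, ← Finset.mul_sum, Finset.sum_const, nsmul_eq_mul]
    rw [hcard, hcolsum, hrowsum]
    ring
  -- combine the double sums
  rw [← Finset.sum_sub_distrib]
  simp only [← Finset.sum_sub_distrib]
  rw [sum_split_pair a b hab]
  -- evaluate the generic rows (i ∉ {a,b})
  have hgen : ∀ i ∈ univ \ ({a, b} : Finset (ZMod n)),
      (∑ j : ZMod n, (chi (i.val < j.val ∧ (x i).val < (x j).val)
        - chi (i.val < j.val ∧ (y i).val < (y j).val)))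
      = chi (b.val < a.val) * chi (d.val < c.val)
        - chi (b.val < a.val) * chi (0 < ((x i) - c).val ∧ ((x i) - c).val < (d - c).val)
        - chi (d.val < c.val) * chi (0 < (i - a).val ∧ (i - a).val < (b - a).val) := by
    intro i hi
    have hi' := hi
    rw [Finset.mem_sdiff, Finset.mem_insert, Finset.mem_singleton] at hi'
    push_neg at hi'
    obtain ⟨-, hia, hib⟩ := hi'
    have hxic : x i ≠ c := fun h => hia (x.injective (h.trans hxa.symm))
    have hxid : x i ≠ d := fun h => hib (x.injective (h.trans hxb.symm))
    simp only [hyo i hia hib]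
    rw [sum_pair_of_support a b hab _ (fun j hja hjb => by rw [hyo j hja hjb, sub_self])]
    rw [hxa, hya, hxb, hyb]
    have hia' : i.val ≠ a.val := fun h => hia (ZMod.val_injective n h)
    have hib' : i.val ≠ b.val := fun h => hib (ZMod.val_injective n h)
    have hxic' : (x i).val ≠ c.val := fun h => hxic (ZMod.val_injective n h)
    have hxid' : (x i).val ≠ d.val := fun h => hxid (ZMod.val_injective n h)
    have h1 := chi_factor (P := i.val < a.val) (Q := (x i).val < c.val)
      (R := (x i).val < d.val) (S := i.val < b.val)
    rw [chi_flip_lt i.val a.val hia', chi_flip_lt i.val b.val hib',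
      chi_flip_lt (x i).val c.val hxic', chi_flip_lt (x i).val d.val hxid'] at h1
    have h3 := lt_pair_prod a b c d i (x i) hab hcd hia hib hxic hxid (hemp i)
    linear_combination h1 + h3
  rw [Finset.sum_congr rfl hgen]
  -- evaluate rows a and b
  have hrowab :
      (∑ j : ZMod n, (chi (a.val < j.val ∧ (x a).val < (x j).val)
          - chi (a.val < j.val ∧ (y a).val < (y j).val)))
      + (∑ j : ZMod n, (chi (b.val < j.val ∧ (x b).val < (x j).val)
          - chi (b.val < j.val ∧ (y b).val < (y j).val)))
      = (chi (b.val < a.val) * chi (d.val < c.val) * ((n : ℚ) - 2)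
          - chi (b.val < a.val) * (((d - c).val : ℚ) - 1)
          - chi (d.val < c.val) * (((b - a).val : ℚ) - 1))
        + (1 - 2 * chi (b.val < a.val)) * (1 - 2 * chi (d.val < c.val)) := by
    rw [hxa, hya, hxb, hyb]
    rw [← Finset.sum_add_distrib]
    rw [sum_split_pair a b hab]
    -- generic j
    have hj : ∀ j ∈ univ \ ({a, b} : Finset (ZMod n)),
        ((chi (a.val < j.val ∧ c.val < (x j).val) - chi (a.val < j.val ∧ d.val < (y j).val))
          + (chi (b.val < j.val ∧ d.val < (x j).val) - chi (b.val < j.val ∧ c.val < (y j).val)))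
        = (chi (a.val < j.val ∧ c.val < (x j).val) - chi (a.val < j.val ∧ d.val < (x j).val))
          + (chi (b.val < j.val ∧ d.val < (x j).val) - chi (b.val < j.val ∧ c.val < (x j).val)) := by
      intro j hj
      rw [Finset.mem_sdiff, Finset.mem_insert, Finset.mem_singleton] at hj
      push_neg at hj
      rw [hyo j hj.2.1 hj.2.2]
    rw [Finset.sum_congr rfl hj, Finset.sum_congr rfl hmid, hmidsum]
    -- corner terms
    rw [hxa, hya, hxb, hyb]
    have hAa : chi (a.val < a.val ∧ c.val < c.val) = 0 := chi_neg (by omega)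
    have hAb : chi (a.val < a.val ∧ d.val < d.val) = 0 := chi_neg (by omega)
    have hBa : chi (b.val < b.val ∧ d.val < d.val) = 0 := chi_neg (by omega)
    have hBb : chi (b.val < b.val ∧ c.val < c.val) = 0 := chi_neg (by omega)
    have heps := eps_id a.val b.val c.val d.val hab' hcd'
    rw [hAa, hAb, hBa, hBb]
    linear_combination heps
  linear_combination hmidsum + hrowab
end MaslovAux
open MaslovAux

/-- If `r ∈ Rect(x,y)` is a rectangle with no point of `x` in its interior, then
`M(x) = M(y) + 1 - 2·#(O ∩ r)`. -/
theorem Maslov_of_rect (n : ℕ) [NeZero n] (x y τ : Equiv.Perm (ZMod n)) (r : GRect n)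
    (hc : Connects r x y) (he : Empt x r) :
    Maslov n x τ = Maslov n y τ + 1 - 2 * (Ocount τ r : ℚ) := by
  obtain ⟨hxa, hxb, hy⟩ := hc
  have hab : r.a ≠ r.b := r.2.1
  have hcd : r.c ≠ r.d := r.2.2
  have hya : y r.a = r.d := by
    rw [hy]; simp only [Equiv.Perm.mul_apply, Equiv.swap_apply_left]; exact hxb
  have hyb : y r.b = r.c := by
    rw [hy]; simp only [Equiv.Perm.mul_apply, Equiv.swap_apply_right]; exact hxa
  have hyo : ∀ i, i ≠ r.a → i ≠ r.b → y i = x i := fun i hia hib => by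
    rw [hy]; simp only [Equiv.Perm.mul_apply, Equiv.swap_apply_of_ne_of_ne hia hib]
  have hemp : ∀ j : ZMod n, ¬ ((0 < (j - r.a).val ∧ (j - r.a).val < (r.b - r.a).val) ∧
      (0 < ((x j) - r.c).val ∧ ((x j) - r.c).val < (r.d - r.c).val)) :=
    fun j h => he j ⟨h.1.1, h.1.2, h.2.1, h.2.2⟩
  have hOc : (∑ j : ZMod n, chi ((j - r.a).val < (r.b - r.a).val ∧
      ((τ j) - r.c).val < (r.d - r.c).val)) = (Ocount τ r : ℚ) := by
    rw [sum_chi, Ocount]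
    norm_cast
  have hSS := SS_diff r.a r.b r.c r.d x y hab hcd hxa hxb hya hyb hyo hemp
  have hSO := SO_diff r.a r.b r.c r.d x y τ hab hcd hxa hxb hya hyb hyo
  have hOS := OS_diff r.a r.b r.c r.d x y τ hab hcd hxa hxb hya hyb hyo
  rw [maslov_eq x τ, maslov_eq y τ, ← hOc]
  linear_combination hSS - hSO - hOS
end

section
/- For x, y grid states and r ∈ Rect(x,y), the Alexander multi-grading satisfies A(x) - A(y) = Σ_i (X_i(r) - O_i(r))·g(i), where X_i(r), O_i(r) ∈ {0,1} indicate whether X_i resp. O_i lies in r, and g(i) is the standard basis vector of the link component containing O_i. -/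
/-- The planar realization of the markings (of a permutation `τ`) lying on the link
component `j` (as recorded by the component-assignment `cmp`). -/
def markPtsComp (n : ℕ) [NeZero n] {ℓ : ℕ} (τ : Equiv.Perm (ZMod n))
    (cmp : ZMod n → Fin ℓ) (j : Fin ℓ) : Finset (ℚ × ℚ) :=
  (Finset.univ.filter (fun i : ZMod n => cmp i = j)).image
    (fun i : ZMod n => ((i.val : ℚ) + 1/2, ((τ i).val : ℚ) + 1/2))

/-- The number of markings of `τ` on component `j` (i.e. `n_j`). -/
def numComp (n : ℕ) [NeZero n] {ℓ : ℕ} (cmp : ZMod n → Fin ℓ) (j : Fin ℓ) : ℕ :=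
  (Finset.univ.filter (fun i : ZMod n => cmp i = j)).card

/-- The Alexander grading
`A_j(x) = J(x - ½(X+O), X_j - O_j) - (n_j - 1)/2`, expanded bilinearly.
Here `τ` records the `O`-markings, `ξ` the `X`-markings, and `cO`, `cX` assign link
components to them. -/
def Alexander (n : ℕ) [NeZero n] {ℓ : ℕ} (x τ ξ : Equiv.Perm (ZMod n))
    (cO cX : ZMod n → Fin ℓ) (j : Fin ℓ) : ℚ :=
  let P := statePts n x
  let O := markPts n τ
  let X := markPts n ξ
  let Oj := markPtsComp n τ cO j
  let Xj := markPtsComp n ξ cX j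
  (Jpairs P Xj - Jpairs P Oj)
    - (Jpairs X Xj - Jpairs X Oj + Jpairs O Xj - Jpairs O Oj) / 2
    - ((numComp n cX j : ℚ) - 1) / 2

/-- The number of `X`-markings of component `j` inside the rectangle `r`. -/
def XcountComp {n : ℕ} [NeZero n] {ℓ : ℕ} (ξ : Equiv.Perm (ZMod n))
    (cX : ZMod n → Fin ℓ) (j : Fin ℓ) (r : GRect n) : ℕ :=
  (Finset.univ.filter (fun i : ZMod n => cX i = j ∧ CellIn r i (ξ i))).card


/-! ### Auxiliary machinery for the proof -/

private def jf (p q : ℚ × ℚ) : ℚ :=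
  ((if p.1 < q.1 ∧ p.2 < q.2 then (1:ℚ) else 0)
    + (if q.1 < p.1 ∧ q.2 < p.2 then (1:ℚ) else 0)) / 2

private lemma Ipairs_cast (A B : Finset (ℚ × ℚ)) :
    (Ipairs A B : ℚ) = ∑ p ∈ A, ∑ q ∈ B, (if p.1 < q.1 ∧ p.2 < q.2 then (1:ℚ) else 0) := by
  unfold Ipairs
  rw [Finset.card_filter]
  push_cast
  rw [Finset.sum_product]

private lemma Jpairs_eq_sum (A B : Finset (ℚ × ℚ)) :
    Jpairs A B = ∑ p ∈ A, ∑ q ∈ B, jf p q := by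
  unfold Jpairs
  rw [Ipairs_cast, Ipairs_cast]
  rw [Finset.sum_comm (s := B) (t := A)]
  rw [← Finset.sum_add_distrib, Finset.sum_div]
  refine Finset.sum_congr rfl fun p _ => ?_
  rw [← Finset.sum_add_distrib, Finset.sum_div]
  rfl

private lemma sum_statePts {n : ℕ} [NeZero n] (x : Equiv.Perm (ZMod n)) (g : ℚ × ℚ → ℚ) :
    ∑ p ∈ statePts n x, g p = ∑ i : ZMod n, g ((i.val : ℚ), ((x i).val : ℚ)) := by
  unfold statePts
  refine Finset.sum_image ?_
  intro i _ k _ h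
  have h1 : (i.val : ℚ) = (k.val : ℚ) := congrArg Prod.fst h
  exact ZMod.val_injective n (by exact_mod_cast h1)

private lemma sum_markPtsComp {n : ℕ} [NeZero n] {ℓ : ℕ} (τ : Equiv.Perm (ZMod n))
    (cmp : ZMod n → Fin ℓ) (j : Fin ℓ) (g : ℚ × ℚ → ℚ) :
    ∑ p ∈ markPtsComp n τ cmp j, g p
      = ∑ i ∈ Finset.univ.filter (fun i : ZMod n => cmp i = j),
          g ((i.val : ℚ) + 1/2, ((τ i).val : ℚ) + 1/2) := by
  unfold markPtsComp
  refine Finset.sum_image ?_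
  intro i _ k _ h
  have h1 : (i.val : ℚ) + 1/2 = (k.val : ℚ) + 1/2 := congrArg Prod.fst h
  have h2 : (i.val : ℚ) = (k.val : ℚ) := by linarith
  exact ZMod.val_injective n (by exact_mod_cast h2)

private lemma lt_half_iff (a u : ℕ) : ((a:ℚ) < (u:ℚ) + 1/2) ↔ a ≤ u := by
  constructor
  · intro h
    have h2 : (a:ℚ) < (u:ℚ) + 1 := by linarith
    exact Nat.lt_succ_iff.mp (by exact_mod_cast h2)
  · intro h
    have : (a:ℚ) ≤ (u:ℚ) := by exact_mod_cast h
    linarith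

private lemma half_lt_iff (a u : ℕ) : ((u:ℚ) + 1/2 < (a:ℚ)) ↔ ¬ a ≤ u := by
  rw [Nat.not_le]
  constructor
  · intro h
    have : (u:ℚ) < (a:ℚ) := by linarith
    exact_mod_cast this
  · intro h
    have h2 : (u:ℚ) + 1 ≤ (a:ℚ) := by exact_mod_cast Nat.succ_le_of_lt h
    linarith

private lemma jf_rect (a b c d u v : ℕ) :
    jf ((a:ℚ), (c:ℚ)) ((u:ℚ)+1/2, (v:ℚ)+1/2) + jf ((b:ℚ), (d:ℚ)) ((u:ℚ)+1/2, (v:ℚ)+1/2)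
      - jf ((a:ℚ), (d:ℚ)) ((u:ℚ)+1/2, (v:ℚ)+1/2) - jf ((b:ℚ), (c:ℚ)) ((u:ℚ)+1/2, (v:ℚ)+1/2)
    = ((if a ≤ u then (1:ℚ) else 0) - (if b ≤ u then (1:ℚ) else 0))
        * ((if c ≤ v then (1:ℚ) else 0) - (if d ≤ v then (1:ℚ) else 0)) := by
  by_cases h1 : a ≤ u <;> by_cases h2 : b ≤ u <;> by_cases h3 : c ≤ v <;> by_cases h4 : d ≤ v <;>
    simp only [jf, lt_half_iff, half_lt_iff, h1, h2, h3, h4, not_true, not_false_iff,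
      true_and, and_true, false_and, and_false, if_true, if_false, not_false_eq_true,
      ite_true, ite_false] <;> norm_num

private lemma val_sub_eq {n : ℕ} [NeZero n] (a u : ZMod n) :
    (u - a).val = if a.val ≤ u.val then u.val - a.val else u.val + n - a.val := by
  have h1 : a.val ≤ u.val + n := le_trans a.val_lt.le (Nat.le_add_left _ _)
  have h2 : u - a = ((u.val + n - a.val : ℕ) : ZMod n) := by
    push_cast [h1]
    simp [ZMod.natCast_val, ZMod.natCast_self]
  rw [h2, ZMod.val_natCast]
  have ha := a.val_lt
  have hu := u.val_lt
  rcases le_or_gt a.val u.val with h | h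
  · simp only [if_pos h]
    have h3 : u.val + n - a.val = (u.val - a.val) + n := by omega
    rw [h3, Nat.add_mod_right, Nat.mod_eq_of_lt (by omega)]
  · simp only [if_neg (not_le.mpr h)]
    exact Nat.mod_eq_of_lt (by omega)

private lemma col_ind {n : ℕ} [NeZero n] (a b u : ZMod n) (hab : a ≠ b) :
    ((if a.val ≤ u.val then (1:ℚ) else 0) - (if b.val ≤ u.val then (1:ℚ) else 0))
      = (if (u - a).val < (b - a).val then (1:ℚ) else 0)
          - (if b.val < a.val then (1:ℚ) else 0) := by
  have hne : a.val ≠ b.val := fun h => hab (ZMod.val_injective n h)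
  have ha := a.val_lt
  have hb := b.val_lt
  have hu := u.val_lt
  rw [val_sub_eq, val_sub_eq]
  split_ifs <;> (try norm_num) <;> omega

private def icol {n : ℕ} (r : GRect n) (i : ZMod n) : ℚ :=
  if (i - r.a).val < (r.b - r.a).val then 1 else 0
private def irow {n : ℕ} (r : GRect n) (k : ZMod n) : ℚ :=
  if (k - r.c).val < (r.d - r.c).val then 1 else 0
private def kcol {n : ℕ} (r : GRect n) : ℚ := if r.b.val < r.a.val then 1 else 0
private def krow {n : ℕ} (r : GRect n) : ℚ := if r.d.val < r.c.val then 1 else 0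

private lemma Jpairs_diff {n : ℕ} [NeZero n] {ℓ : ℕ} (x y : Equiv.Perm (ZMod n)) (r : GRect n)
    (hc : Connects r x y) (σ : Equiv.Perm (ZMod n)) (c : ZMod n → Fin ℓ) (j : Fin ℓ) :
    Jpairs (statePts n x) (markPtsComp n σ c j)
      - Jpairs (statePts n y) (markPtsComp n σ c j)
      = ∑ i ∈ Finset.univ.filter (fun i : ZMod n => c i = j),
          (icol r i - kcol r) * (irow r (σ i) - krow r) := by
  obtain ⟨hxa, hxb, hy⟩ := hc
  have hab : r.a ≠ r.b := r.2.1
  have hcd : r.c ≠ r.d := r.2.2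
  have hy' : ∀ i : ZMod n, i ∉ ({r.a, r.b} : Finset (ZMod n)) → y i = x i := by
    intro i hi
    simp only [Finset.mem_insert, Finset.mem_singleton, not_or] at hi
    rw [hy]
    simp [Equiv.swap_apply_of_ne_of_ne hi.1 hi.2]
  have hya : y r.a = r.d := by rw [hy]; simp [hxb]
  have hyb : y r.b = r.c := by rw [hy]; simp [hxa]
  rw [Jpairs_eq_sum, Jpairs_eq_sum, sum_statePts, sum_statePts, ← Finset.sum_sub_distrib]
  rw [← Finset.sum_subset (Finset.subset_univ ({r.a, r.b} : Finset (ZMod n)))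
    (fun i _ hi => by rw [hy' i hi, sub_self])]
  rw [Finset.sum_pair hab, hxa, hxb, hya, hyb]
  rw [sum_markPtsComp, sum_markPtsComp, sum_markPtsComp, sum_markPtsComp]
  rw [← Finset.sum_sub_distrib, ← Finset.sum_sub_distrib, ← Finset.sum_add_distrib]
  refine Finset.sum_congr rfl fun i _ => ?_
  have key := jf_rect r.a.val r.b.val r.c.val r.d.val i.val ((σ i).val)
  have hC := col_ind r.a r.b i hab
  have hR := col_ind r.c r.d (σ i) hcd
  simp only [icol, irow, kcol, krow]
  rw [← hC, ← hR]
  linear_combination key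

private lemma count_eq {n : ℕ} [NeZero n] {ℓ : ℕ} (σ : Equiv.Perm (ZMod n))
    (c : ZMod n → Fin ℓ) (j : Fin ℓ) (r : GRect n) :
    ((Finset.univ.filter (fun i : ZMod n => c i = j ∧ CellIn r i (σ i))).card : ℚ)
      = ∑ i ∈ Finset.univ.filter (fun i : ZMod n => c i = j), icol r i * irow r (σ i) := by
  rw [← Finset.filter_filter, ← Finset.sum_boole]
  refine Finset.sum_congr rfl fun i _ => ?_
  by_cases h1 : (i - r.a).val < (r.b - r.a).val <;>
    by_cases h2 : (σ i - r.c).val < (r.d - r.c).val <;>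
      simp [icol, irow, CellIn, h1, h2]

private lemma rowsum_eq {n : ℕ} [NeZero n] {ℓ : ℕ} (τ ξ : Equiv.Perm (ZMod n))
    (cO cX : ZMod n → Fin ℓ) (hrow : ∀ a b : ZMod n, τ a = ξ b → cO a = cX b)
    (j : Fin ℓ) (r : GRect n) :
    ∑ i ∈ Finset.univ.filter (fun i : ZMod n => cX i = j), irow r (ξ i)
      = ∑ i ∈ Finset.univ.filter (fun i : ZMod n => cO i = j), irow r (τ i) := by
  rw [Finset.sum_filter, Finset.sum_filter]
  have h1 : ∀ i : ZMod n, (if cX i = j then irow r (ξ i) else 0)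
      = (fun k => if cX (ξ.symm k) = j then irow r k else 0) (ξ i) := by
    intro i; simp
  have h2 : ∀ i : ZMod n, (if cO i = j then irow r (τ i) else 0)
      = (fun k => if cO (τ.symm k) = j then irow r k else 0) (τ i) := by
    intro i; simp
  rw [Finset.sum_congr rfl (fun i _ => h1 i), Finset.sum_congr rfl (fun i _ => h2 i)]
  rw [Equiv.sum_comp ξ (fun k => if cX (ξ.symm k) = j then irow r k else 0),
    Equiv.sum_comp τ (fun k => if cO (τ.symm k) = j then irow r k else 0)]
  refine Finset.sum_congr rfl fun k _ => ?_
  have h3 : cO (τ.symm k) = cX (ξ.symm k) := hrow _ _ (by simp)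
  rw [h3]

private lemma expand_sum {α : Type*} (s : Finset α) (f g : α → ℚ) (κ1 κ2 : ℚ) :
    ∑ i ∈ s, (f i - κ1) * (g i - κ2)
      = (∑ i ∈ s, f i * g i) - κ2 * (∑ i ∈ s, f i) - κ1 * (∑ i ∈ s, g i)
          + κ1 * κ2 * (s.card : ℚ) := by
  rw [Finset.mul_sum, Finset.mul_sum, ← Finset.sum_sub_distrib, ← Finset.sum_sub_distrib]
  have h : (κ1 * κ2 * (s.card : ℚ)) = ∑ _i ∈ s, κ1 * κ2 := by
    rw [Finset.sum_const, nsmul_eq_mul]; ring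
  rw [h, ← Finset.sum_add_distrib]
  exact Finset.sum_congr rfl fun i _ => by ring

/-- For a rectangle `r ∈ Rect(x,y)`, the Alexander multi-grading drops by the count of
`X`-markings minus `O`-markings in `r`, component by component:
`A(x) - A(y) = Σᵢ (Xᵢ(r) - Oᵢ(r))·g(i)`. -/
theorem Alexander_of_rect (n : ℕ) [NeZero n] {ℓ : ℕ} (x y τ ξ : Equiv.Perm (ZMod n))
    (cO cX : ZMod n → Fin ℓ)
    (hrow : ∀ a b : ZMod n, τ a = ξ b → cO a = cX b)
    (hcol : ∀ a : ZMod n, cO a = cX a)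
    (r : GRect n) (hc : Connects r x y) :
    ∀ j : Fin ℓ,
      Alexander n x τ ξ cO cX j - Alexander n y τ ξ cO cX j
        = (XcountComp ξ cX j r : ℚ) - (XcountComp τ cO j r : ℚ) := by
  intro j
  have hfilter : (Finset.univ.filter (fun i : ZMod n => cO i = j))
      = (Finset.univ.filter (fun i : ZMod n => cX i = j)) :=
    Finset.filter_congr (fun i _ => by rw [hcol i])
  have hX := Jpairs_diff x y r hc ξ cX j
  have hO := Jpairs_diff x y r hc τ cO j
  have hmain : Alexander n x τ ξ cO cX j - Alexander n y τ ξ cO cX j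
      = (Jpairs (statePts n x) (markPtsComp n ξ cX j)
          - Jpairs (statePts n y) (markPtsComp n ξ cX j))
        - (Jpairs (statePts n x) (markPtsComp n τ cO j)
          - Jpairs (statePts n y) (markPtsComp n τ cO j)) := by
    simp only [Alexander]
    ring
  rw [hmain, hX, hO, expand_sum, expand_sum]
  have hXc := count_eq ξ cX j r
  have hOc := count_eq τ cO j r
  have hrs := rowsum_eq τ ξ cO cX hrow j r
  have hcolsum : ∑ i ∈ Finset.univ.filter (fun i : ZMod n => cO i = j), icol r i
      = ∑ i ∈ Finset.univ.filter (fun i : ZMod n => cX i = j), icol r i := by rw [hfilter]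
  have hcard : (((Finset.univ.filter (fun i : ZMod n => cO i = j)).card : ℚ))
      = (((Finset.univ.filter (fun i : ZMod n => cX i = j)).card : ℚ)) := by rw [hfilter]
  unfold XcountComp
  rw [← hXc, ← hOc, hrs, hcolsum, hcard]
  ring
end
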